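/- Let U, V be n×n symmetric positive definite real matrices. Then the mixed discriminant satisfies σ_n(U,…,U,V) ≥ det(U)^{(n-1)/n} · det(V)^{1/n}, where σ_n(U,…,U,V) = (1/n) ∑_{i,j} (∂ det/∂u_{ij})(U) · v_{ij} = (1/n) det(U) · tr(U^{-1} V). -/

import Mathlib

/-!
With `S = √(U⁻¹)`, the matrix `S V S` is positive semidefinite, has the trace of `U⁻¹ V` and
determinant `det V / det U`. AM–GM for its eigenvalues gives
`(det V / det U)^(1/n) ≤ tr(U⁻¹ V) / n`, and multiplying by `det U` is the inequality.
-/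

open scoped MatrixOrder

namespace Matrix

variable {ι : Type*} [Fintype ι] [DecidableEq ι]

theorem PosSemidef.det_rpow_le_trace_div_card [Nonempty ι] {A : Matrix ι ι ℝ}
    (hA : A.PosSemidef) :
    A.det ^ (Fintype.card ι : ℝ)⁻¹ ≤ A.trace / Fintype.card ι := by
  have hcard : (0 : ℝ) < Fintype.card ι := by exact_mod_cast Fintype.card_pos
  simpa [hA.1.det_eq_prod_eigenvalues, hA.1.trace_eq_sum_eigenvalues] using
    Real.geom_mean_le_arith_mean Finset.univ 1 hA.1.eigenvalues (fun _ _ => zero_le_one)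
      (by simpa using hcard) (fun i _ => hA.eigenvalues_nonneg i)

theorem PosDef.exists_posSemidef_trace_eq_det_eq {U V : Matrix ι ι ℝ} (hU : U.PosDef)
    (hV : V.PosSemidef) :
    ∃ M : Matrix ι ι ℝ, M.PosSemidef ∧ M.trace = (U⁻¹ * V).trace ∧ M.det = V.det / U.det := by
  set S := CFC.sqrt U⁻¹
  have hSS : S * S = U⁻¹ := CFC.sqrt_mul_sqrt_self U⁻¹ hU.inv.posSemidef.nonneg
  have hS : Sᴴ = S := (nonneg_iff_posSemidef.mp (CFC.sqrt_nonneg U⁻¹)).1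
  refine ⟨S * V * S, ?_, ?_, ?_⟩
  · simpa only [hS] using hV.mul_mul_conjTranspose_same S
  · rw [← hSS, trace_mul_cycle, mul_assoc]
  · rw [det_mul, det_mul, mul_right_comm, ← det_mul, hSS, det_nonsing_inv, Ring.inverse_eq_inv',
      inv_mul_eq_div]

theorem PosDef.det_div_det_rpow_le_trace_inv_mul_div_card [Nonempty ι] {U V : Matrix ι ι ℝ}
    (hU : U.PosDef) (hV : V.PosSemidef) :
    (V.det / U.det) ^ (Fintype.card ι : ℝ)⁻¹ ≤ (U⁻¹ * V).trace / Fintype.card ι := by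
  obtain ⟨M, hM, htrace, hdet⟩ := hU.exists_posSemidef_trace_eq_det_eq hV
  simpa [htrace, hdet] using hM.det_rpow_le_trace_div_card

end Matrix

theorem Real.rpow_one_sub_mul_rpow {a b : ℝ} (ha : 0 < a) (hb : 0 ≤ b) (y : ℝ) :
    a ^ (1 - y) * b ^ y = a * (b / a) ^ y := by
  rw [Real.rpow_sub ha, Real.rpow_one, Real.div_rpow hb ha.le]
  ring

theorem garding_mixed_discriminant_general {n : ℕ} (hn : 0 < n)
    (U V : Matrix (Fin n) (Fin n) ℝ)
    (hU : U.PosDef) (hV : V.PosDef) :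
    U.det ^ (((n : ℝ) - 1) / n) * V.det ^ ((1 : ℝ) / n) ≤
      (1 / n) * U.det * (U⁻¹ * V).trace := by
  have : NeZero n := ⟨hn.ne'⟩
  have hexp : ((n : ℝ) - 1) / n = 1 - 1 / n := by field_simp
  have hamgm := hU.det_div_det_rpow_le_trace_inv_mul_div_card hV.posSemidef
  rw [Fintype.card_fin, ← one_div] at hamgm
  rw [hexp, Real.rpow_one_sub_mul_rpow hU.det_pos hV.det_pos.le, mul_comm _ U.det, mul_assoc,
    one_div_mul_eq_div]
  exact mul_le_mul_of_nonneg_left hamgm hU.det_pos.le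

/-- Gårding's inequality for the mixed discriminant: for symmetric positive
definite `n×n` matrices `U, V`,
`σ_n(U,…,U,V) = (1/n) det(U) tr(U⁻¹V) ≥ det(U)^((n-1)/n) · det(V)^(1/n)`. -/
theorem garding_mixed_discriminant {n : ℕ} (hn : 0 < n)
    (U V : Matrix (Fin n) (Fin n) ℝ)
    (hUsymm : U.IsSymm) (hVsymm : V.IsSymm)
    (hU : U.PosDef) (hV : V.PosDef) :
    U.det ^ (((n : ℝ) - 1) / n) * V.det ^ ((1 : ℝ) / n) ≤
      (1 / n) * U.det * (U⁻¹ * V).trace :=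
  garding_mixed_discriminant_general hn U V hU hV
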